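/- Pointwise projections of model D: for every configuration w ∈ {∘,b,g}^ℤ and every update configuration u ∈ 𝒰^ℤ, one has π_B(𝒟(w,u)) = ℬ(π_B(w),u) and π_C(𝒟(w,u)) = 𝒞(π_C(w),u). (Lemma 6.2, pointwise form.) -/
import Mathlib

/-!
Conventions: a configuration of model D is `w : ℤ → Option Bool`, where `none` = ∘
(empty), `some true` = b (blue particle) and `some false` = g (green particle);
a configuration of models B/C is `y : ℤ → Bool` (`false` = ∘, `true` = •);
an update configuration is `u : ℤ → Bool` (`true` = ↑ stay, `false` = → move right).
-/

/-- The local map `ℬ` of model B: the `i`-th coordinate of `ℬ(y,u)` is `•` iff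
`(y_{i-1}y_i, u_{i-1}u_i) ∈ {(•∘, →⋅), (∘•, ⋅↑), (••, ↑↑), (••, →→)}`. -/
def modelB (y u : ℤ → Bool) : ℤ → Bool := fun i =>
  match y (i - 1), y i with
  | true, false => !u (i - 1)
  | false, true => u i
  | true, true => u (i - 1) == u i
  | false, false => false

/-- The local map `𝒞` of model C: the `i`-th coordinate of `𝒞(z,u)` is `•` iff
`(z_{i-1}z_i, u_{i-1}u_i) ∈ {(•∘, →⋅), (∘•, ⋅↑), (••, ↑↑), (••, →⋅)}`. -/
def modelC (z u : ℤ → Bool) : ℤ → Bool := fun i =>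
  match z (i - 1), z i with
  | true, false => !u (i - 1)
  | false, true => u i
  | true, true => !u (i - 1) || u i
  | false, false => false

/-- The local map `𝒟` of model D.  A particle at site `i` stays if `u_i = ↑` and moves
to `i+1` if `u_i = →`; colliding particles merge, with colors given by `b+b → g`,
`g+g → g`, `b+g → b`, `g+b → b` (with blue = `true`, green = `false`, the merged color
is `xor` of the colors); in the absence of a collision a particle keeps its color.
Site `i` of `𝒟(w,u)` is occupied exactly when site `i` of `𝒞(π_C(w),u)` is `•`. -/
def modelD (w : ℤ → Option Bool) (u : ℤ → Bool) : ℤ → Option Bool := fun i =>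
  match w (i - 1), w i, u (i - 1), u i with
  | some a, none, false, _ => some a          -- particle at i-1 moves to i
  | none, some b, _, true => some b           -- particle at i stays
  | some _, some b, true, true => some b      -- both stay: particle at i keeps color
  | some a, some b, false, true => some (xor a b)  -- collision at i: merge
  | some a, some _, false, false => some a    -- particle at i leaves, i-1 arrives
  | _, _, _, _ => none

/-- The projection `π_B`: `π_B(∘) = ∘`, `π_B(b) = •`, `π_B(g) = ∘`. -/
def piB (c : Option Bool) : Bool := c == some true

/-- The projection `π_C`: `π_C(∘) = ∘`, `π_C(b) = •`, `π_C(g) = •`. -/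
def piC (c : Option Bool) : Bool := c.isSome

/-- Lemma 6.2, pointwise form: the coordinate-wise projections
`π_B` and `π_C` intertwine model D with models B and C respectively. -/
theorem piB_piC_modelD (w : ℤ → Option Bool) (u : ℤ → Bool) :
    (fun i => piB (modelD w u i)) = modelB (fun i => piB (w i)) u ∧
    (fun i => piC (modelD w u i)) = modelC (fun i => piC (w i)) u := by
  constructor <;> funext i <;>
    rcases h1 : w (i - 1) with _ | a <;> rcases h2 : w i with _ | b <;>
    rcases h3 : u (i - 1) <;> rcases h4 : u i <;>
    (try rcases a) <;> (try rcases b) <;>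
    simp [modelD, modelB, modelC, piB, piC, h1, h2, h3, h4]
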